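/- arXiv:2410.17847 — 9 statements merged into one kernel-verified Lean document; each statement's English description precedes it below -/
import Mathlib

section
/- A condensed set X is discrete (i.e. lies in the essential image of the constant sheaf functor from Set to CondSet) if and only if it lies in the essential image of the functor L : Set → CondSet sending a set Y to the sheaf S ↦ LocConst(S, Y) of locally constant maps; that is, X is discrete if and only if there exists a set Y and an isomorphism of condensed sets X ≅ LocConst(−, Y). -/
universe u

open CategoryTheory Limits

/-- A condensed set `X` is discrete (i.e. lies in the essential image of the constant sheaf
functor from `Set` to `CondSet`) if and only if there exists a set `Y` and an isomorphism of
condensed sets `X ≅ LocConst(−, Y)`. -/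
theorem condensedSet_isDiscrete_iff_locallyConstant (X : CondensedSet.{u}) :
    X.IsDiscrete ↔ ∃ (Y : Type (u + 1)),
      Nonempty (X ≅ CondensedSet.LocallyConstant.functor.obj Y) :=
  ((CondensedSet.isDiscrete_tfae X).out 0 3).trans <|
    exists_congr fun Y ↦ Iso.nonempty_iso_symm _ _
end

section
/- A condensed set X is discrete if and only if it satisfies the colimit condition: for every profinite set S, writing S as the limit of the cofiltered diagram of its discrete quotients S_i with projections π_i : S → S_i, the cocone on the diagram i ↦ X(S_i) with cocone point X(S) and coprojections X(π_i) is a colimit cocone; equivalently, the canonical map colim_i X(S_i) → X(S) is an isomorphism. -/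
universe u

open CategoryTheory Limits

/-- A condensed set `X` is discrete if and only if it satisfies the colimit condition: for every
profinite set `S`, written as the limit of the cofiltered diagram of its discrete quotients `Sᵢ`
with projections `πᵢ : S → Sᵢ` (this is `S.asLimitCone`), the cocone on the diagram `i ↦ X(Sᵢ)`
with cocone point `X(S)` and coprojections `X(πᵢ)` is a colimit cocone. -/
theorem condensedSet_isDiscrete_iff_colimitCondition (X : CondensedSet.{u}) :
    X.IsDiscrete ↔ ∀ S : Profinite.{u},
      Nonempty (IsColimit <| (profiniteToCompHaus.op ⋙ X.val).mapCocone S.asLimitCone.op) :=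
  (CondensedSet.isDiscrete_tfae X).out 0 6
end

section
/- Let R be a ring. A condensed R-module is discrete (i.e. lies in the essential image of the constant sheaf functor from R-modules to condensed R-modules) if and only if its underlying condensed set (obtained by postcomposing with the forgetful functor from R-modules to sets) is discrete. -/
universe u

open CategoryTheory Limits

/-- Let `R` be a ring. A condensed `R`-module is discrete (i.e. lies in the essential image of
the constant sheaf functor from `R`-modules to condensed `R`-modules) if and only if its
underlying condensed set (obtained by postcomposing with the forgetful functor from `R`-modules
to sets) is discrete. -/
theorem condensedMod_isDiscrete_iff_isDiscrete_forget (R : Type (u + 1)) [Ring R]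
    (M : CondensedMod.{u} R) :
    M.IsDiscrete ↔ ((Condensed.forget R).obj M).IsDiscrete :=
  CondensedMod.isDiscrete_iff_isDiscrete_forget R M
end

section
/- Let R be a ring. A condensed R-module X is discrete if and only if for every profinite set S, writing S as the limit of the cofiltered diagram of its discrete quotients S_i with projections π_i : S → S_i, the cocone on the diagram i ↦ X(S_i) with cocone point X(S) and coprojections X(π_i) is a colimit cocone in the category of R-modules. -/
universe u

open CategoryTheory Limits

/-- Let `R` be a ring. A condensed `R`-module `X` is discrete if and only if for every profinite
set `S`, written as the limit of the cofiltered diagram of its discrete quotients `Sᵢ` with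
projections `πᵢ : S → Sᵢ` (this is `S.asLimitCone`), the cocone on the diagram `i ↦ X(Sᵢ)` with
cocone point `X(S)` and coprojections `X(πᵢ)` is a colimit cocone in the category of
`R`-modules. -/
theorem condensedMod_isDiscrete_iff_colimitCondition (R : Type (u + 1)) [Ring R]
    (M : CondensedMod.{u} R) :
    M.IsDiscrete ↔ ∀ S : Profinite.{u},
      Nonempty (IsColimit <| (profiniteToCompHaus.op ⋙ M.val).mapCocone S.asLimitCone.op) :=
  (CondensedMod.isDiscrete_tfae R M).out 0 6
end

section
/- A light condensed set X is discrete if and only if it satisfies the colimit condition: for every light profinite set S, writing S as the limit of the cofiltered diagram of its discrete quotients S_i with projections π_i : S → S_i, the cocone on the diagram i ↦ X(S_i) with cocone point X(S) and coprojections X(π_i) is a colimit cocone in Set. -/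
universe u

open CategoryTheory Limits

namespace LightProfinite

variable (S : LightProfinite.{u})

/-- The functor from the cofiltered poset of discrete quotients of a light profinite set `S` to
the category of finite sets, sending a discrete quotient to its (finite) set of equivalence
classes. -/
noncomputable def dqFintypeDiagram : DiscreteQuotient S ⥤ FintypeCat.{u} where
  obj Q := FintypeCat.of Q
  map f := FintypeCat.homMk (DiscreteQuotient.ofLE f.le)
  map_comp f g := by ext x; exact (DiscreteQuotient.ofLE_ofLE f.le g.le x).symm

/-- The cofiltered diagram of discrete quotients of a light profinite set `S`, viewed as a diagram
of light profinite sets. -/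
noncomputable abbrev dqDiagram : DiscreteQuotient S ⥤ LightProfinite.{u} :=
  S.dqFintypeDiagram ⋙ FintypeCat.toLightProfinite

/-- The cone over the diagram of discrete quotients of a light profinite set `S`, with cone point
`S` and projections `πᵢ : S → Sᵢ`, exhibiting `S` as the limit of its discrete quotients. -/
noncomputable def asDQLimitCone : Cone S.dqDiagram where
  pt := S
  π := {
    app := fun Q => ConcreteCategory.ofHom ⟨Q.proj, IsLocallyConstant.continuous Q.proj_isLocallyConstant⟩
    naturality := fun _ _ f => by
      ext x
      exact (DiscreteQuotient.ofLE_proj f.le x).symm.trans rfl }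

open FintypeCat Functor

attribute [local instance] FintypeCat.botTopology FintypeCat.discreteTopology ConcreteCategory.instFunLike

/-- The functor from the poset of discrete quotients of `S` to the structured arrow category. -/
noncomputable def dqToStructuredArrow :
    DiscreteQuotient S ⥤ StructuredArrow S toLightProfinite where
  obj Q := StructuredArrow.mk (S.asDQLimitCone.π.app Q)
  map f := StructuredArrow.homMk (S.dqFintypeDiagram.map f) (S.asDQLimitCone.w f)

instance (Q : DiscreteQuotient S) : Epi (S.asDQLimitCone.π.app Q) :=
  (LightProfinite.epi_iff_surjective _).mpr (by exact Q.proj_surjective)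

theorem dqToStructuredArrow_initial : (S.dqToStructuredArrow).Initial := by
  rw [Functor.initial_iff_of_isCofiltered]
  constructor
  · intro d
    let f : LocallyConstant S d.right :=
      ⟨⇑d.hom, (haveI := FintypeCat.discreteTopology d.right; (IsLocallyConstant.iff_continuous _).mpr) (ConcreteCategory.hom d.hom).continuous⟩
    refine ⟨f.discreteQuotient, ⟨StructuredArrow.homMk (FintypeCat.homMk f.lift) ?_⟩⟩
    ext x
    rfl
  · intro d Q s s'
    refine ⟨Q, 𝟙 Q, ?_⟩
    simp only [CategoryTheory.Functor.map_id, Category.id_comp]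
    ext1
    have ws := s.w
    have ws' := s'.w
    have : S.asDQLimitCone.π.app Q ≫ toLightProfinite.map s.right =
        S.asDQLimitCone.π.app Q ≫ toLightProfinite.map s'.right := ws.trans ws'.symm
    exact toLightProfinite.map_injective ((cancel_epi (S.asDQLimitCone.π.app Q)).mp this)

/-- The opposite functor into the costructured arrow category. -/
noncomputable def dqFunctorOp :
    (DiscreteQuotient S)ᵒᵖ ⥤ CostructuredArrow toLightProfinite.op ⟨S⟩ :=
  (S.dqToStructuredArrow).op ⋙ StructuredArrow.toCostructuredArrow _ _

theorem dqFunctorOp_final : (S.dqFunctorOp).Final := by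
  have := S.dqToStructuredArrow_initial
  have : ((StructuredArrow.toCostructuredArrow toLightProfinite S)).IsEquivalence :=
    (inferInstance : (structuredArrowOpEquivalence _ _).functor.IsEquivalence)
  exact Functor.final_comp (S.dqToStructuredArrow).op _

example (G : LightProfiniteᵒᵖ ⥤ Type u) :
    G.mapCocone S.asDQLimitCone.op = (Extend.cocone G S).whisker S.dqFunctorOp := rfl

example (G : LightProfiniteᵒᵖ ⥤ Type u) :
    G.mapCocone (coconeRightOpOfCone S.asLimitCone) =
      (Extend.cocone G S).whisker (Extend.functorOp S.asLimitCone) := rfl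

end LightProfinite

/-- A light condensed set `X` is discrete if and only if it satisfies the colimit condition: for
every light profinite set `S`, written as the limit of the cofiltered diagram of its discrete
quotients `Sᵢ` with projections `πᵢ : S → Sᵢ`, the cocone on the diagram `i ↦ X(Sᵢ)` with cocone
point `X(S)` and coprojections `X(πᵢ)` is a colimit cocone in `Set`. -/
theorem lightCondSet_isDiscrete_iff_colimitCondition (X : LightCondSet.{u}) :
    X.IsDiscrete ↔ ∀ S : LightProfinite.{u},
      Nonempty (IsColimit <| X.val.mapCocone S.asDQLimitCone.op) := by
  rw [((LightCondSet.isDiscrete_tfae X).out 0 5 :)]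
  refine forall_congr' fun S => ?_
  haveI h1 := S.dqFunctorOp_final
  haveI h2 := LightProfinite.Extend.functorOp_final S.asLimitCone S.asLimit
  constructor
  · rintro ⟨h⟩
    exact ⟨(Functor.Final.isColimitWhiskerEquiv S.dqFunctorOp (LightProfinite.Extend.cocone X.val S)).symm
      ((Functor.Final.isColimitWhiskerEquiv (LightProfinite.Extend.functorOp S.asLimitCone) (LightProfinite.Extend.cocone X.val S)) h)⟩
  · rintro ⟨h⟩
    exact ⟨(Functor.Final.isColimitWhiskerEquiv (LightProfinite.Extend.functorOp S.asLimitCone) (LightProfinite.Extend.cocone X.val S)).symm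
      ((Functor.Final.isColimitWhiskerEquiv S.dqFunctorOp (LightProfinite.Extend.cocone X.val S)) h)⟩
end

section
/- A light condensed set X is discrete if and only if it lies in the essential image of the functor sending a set Y to the sheaf S ↦ LocConst(S, Y) of locally constant maps on light profinite sets; that is, X is discrete if and only if there exists a set Y and an isomorphism of light condensed sets X ≅ LocConst(−, Y). -/
universe u

open CategoryTheory Limits

/-- A light condensed set `X` is discrete if and only if it lies in the essential image of the
functor sending a set `Y` to the sheaf `S ↦ LocConst(S, Y)` of locally constant maps on light
profinite sets; that is, `X` is discrete if and only if there exists a set `Y` and an isomorphism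
of light condensed sets `X ≅ LocConst(−, Y)`. -/
theorem lightCondSet_isDiscrete_iff_locallyConstant (X : LightCondSet.{u}) :
    X.IsDiscrete ↔ ∃ (Y : Type u),
      Nonempty (X ≅ LightCondSet.LocallyConstant.functor.obj Y) := by
  have discrete_iff_mem_essImage := (LightCondSet.isDiscrete_tfae X).out 0 3
  rw [discrete_iff_mem_essImage]
  exact exists_congr fun _ ↦ ⟨Nonempty.map Iso.symm, Nonempty.map Iso.symm⟩
end

section
/- The functor L : Set → CondSet, sending a set Y to the condensed set LocConst(−, Y) of locally constant maps, is left adjoint to the underlying set functor U : CondSet → Set sending a condensed set X to X(*), with unit at a set Y given by the bijection sending y ∈ Y to the constant map * → Y; consequently L is fully faithful and naturally isomorphic to the constant sheaf functor Set → CondSet. -/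
universe u

open CategoryTheory

/-- The functor `L : Set ⥤ CondSet`, sending a set `Y` to the condensed set `LocConst(−, Y)` of
locally constant maps, is left adjoint to the underlying set functor `U : CondSet ⥤ Set` sending
a condensed set `X` to `X(*)`, with unit at a set `Y` given by the map sending `y ∈ Y` to the
corresponding constant map; consequently `L` is fully faithful and naturally isomorphic to the
constant sheaf functor `Set ⥤ CondSet`. -/
theorem locallyConstant_adjunction_unit_const_and_fullyFaithful_and_iso_discrete :
    (∃ (adj : CondensedSet.LocallyConstant.functor.{u} ⊣ Condensed.underlying (Type (u + 1))),
      ∀ (Y : Type (u + 1)) (y : Y), adj.unit.app Y y = LocallyConstant.const _ y) ∧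
    CondensedSet.LocallyConstant.functor.{u}.Full ∧
    CondensedSet.LocallyConstant.functor.{u}.Faithful ∧
    Nonempty (CondensedSet.LocallyConstant.functor.{u} ≅ Condensed.discrete (Type (u + 1))) :=
  ⟨⟨CompHausLike.LocallyConstant.adjunction _ _, fun _ _ ↦ rfl⟩,
    inferInstance, inferInstance, ⟨CondensedSet.LocallyConstant.iso⟩⟩
end

section
/- Let R be a ring and M an R-module. The component at the condensed R-module LocConst(−, M) of the counit of the constant-sheaf/evaluation adjunction, i.e. the canonical morphism from the constant sheaf at the R-module LocConst(*, M) to the sheaf LocConst(−, M), is an isomorphism of condensed R-modules. -/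
universe u

open CategoryTheory Limits

/-- Let `R` be a ring and `M` an `R`-module. The component at the condensed `R`-module
`LocConst(−, M)` of the counit of the constant-sheaf/evaluation adjunction, i.e. the canonical
morphism from the constant sheaf at the `R`-module `LocConst(*, M)` to the sheaf
`LocConst(−, M)`, is an isomorphism of condensed `R`-modules. -/
theorem isIso_counit_app_locallyConstant_condensedMod (R : Type (u + 1)) [Ring R]
    (M : ModuleCat.{u + 1} R) :
    IsIso ((Condensed.discreteUnderlyingAdj (ModuleCat.{u + 1} R)).counit.app
      ((CondensedMod.LocallyConstant.functor R).obj M)) := by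
  -- In the discreteness TFAE, item 3 is "in the essential image of `LocallyConstant.functor`"
  -- and item 1 is "the constant-sheaf counit is an isomorphism".
  have tfae := CondensedMod.isDiscrete_tfae R ((CondensedMod.LocallyConstant.functor R).obj M)
  exact (tfae.out 3 1).mp (Functor.obj_mem_essImage _ M)
end

section
/- Let R be a ring. The functor L : Mod_R → CondMod_R, sending an R-module M to the condensed R-module LocConst(−, M) of locally constant maps, is fully faithful. -/
universe u

open CategoryTheory

/-- Let `R` be a ring. The functor `L : Mod_R ⥤ CondMod_R`, sending an `R`-module `M` to the
condensed `R`-module `LocConst(−, M)` of locally constant maps, is fully faithful. -/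
theorem locallyConstant_functor_condensedMod_full_and_faithful (R : Type (u + 1)) [Ring R] :
    (CondensedMod.LocallyConstant.functor.{u} R).Full ∧
      (CondensedMod.LocallyConstant.functor.{u} R).Faithful :=
  ⟨(CondensedMod.LocallyConstant.fullyFaithfulFunctor R).full,
    (CondensedMod.LocallyConstant.fullyFaithfulFunctor R).faithful⟩
end
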